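/- For every real t with 0 < t < 2, with z₁(t) := t(1+t/2)^{1/2}, z₂(t) := t, z₃(t) := t(1−t/2)^{−1/2}, Y_{1,s} := Ỹ_s/Y_s and S_{1,s} := S̃_s − S_s: (i) S_{1,1}(t)·Y_{1,1}(t)^{1/8}·Y₁(t)^{−1/4} + 2·z₁(t)^{1/2}·Z₁(t) = 0; (ii) S_{1,2}(t)·Y_{1,2}(t)^{1/4}·Y₂(t)^{−1/2} + 2·z₂(t)^{1/2}·Z₂(t) = 0; (iii) S_{1,3}(t)·Y_{1,3}(t)^{3/8}·Y₃(t)^{−3/4} + 2·z₃(t)^{1/2}·Z₃(t) = 0. (All fractional powers are real powers of positive real numbers; these are the instances s = 1, 2, 3 of S_{1,s}·Y_{1,s}^{s/8}·Y_s^{−s/4} + 2z^{1/2}Z_s = 0.) -/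

import Mathlib

/-! Göttsche–Kool universal functions of a real variable `t`, with all square
roots the nonnegative real square roots.  The `t`-suffixed versions
(`gkYt`, `gkZt`, `gkSt`) are the sign-flipped functions obtained by
replacing `√t` with `−√t`. -/

noncomputable def gkY1 (t : ℝ) : ℝ := (1 + t) + Real.sqrt t * Real.sqrt (1 + 3*t/4)
noncomputable def gkYt1 (t : ℝ) : ℝ := (1 + t) - Real.sqrt t * Real.sqrt (1 + 3*t/4)
noncomputable def gkY2 (t : ℝ) : ℝ := Real.sqrt t + Real.sqrt (1 + t)
noncomputable def gkYt2 (t : ℝ) : ℝ := -Real.sqrt t + Real.sqrt (1 + t)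
noncomputable def gkY3 (t : ℝ) : ℝ := 1 + Real.sqrt t * Real.sqrt (1 - t/4)
noncomputable def gkYt3 (t : ℝ) : ℝ := 1 - Real.sqrt t * Real.sqrt (1 - t/4)
noncomputable def gkZ1 (t : ℝ) : ℝ :=
  (1 + 3*t/4 - (1/2) * Real.sqrt t * Real.sqrt (1 + 3*t/4)) / (1 + t/2)
noncomputable def gkZt1 (t : ℝ) : ℝ :=
  (1 + 3*t/4 + (1/2) * Real.sqrt t * Real.sqrt (1 + 3*t/4)) / (1 + t/2)
noncomputable def gkZ2 (t : ℝ) : ℝ := 1 + t - Real.sqrt t * Real.sqrt (1 + t)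
noncomputable def gkZt2 (t : ℝ) : ℝ := 1 + t + Real.sqrt t * Real.sqrt (1 + t)
noncomputable def gkZ3 (t : ℝ) : ℝ :=
  (1 + t/2) * ((1 - t/4)*(1 + t/2)
    - (3/2) * Real.sqrt t * Real.sqrt (1 - t/4) * (1 - t/6)) / (1 - t/2)^3
noncomputable def gkZt3 (t : ℝ) : ℝ :=
  (1 + t/2) * ((1 - t/4)*(1 + t/2)
    + (3/2) * Real.sqrt t * Real.sqrt (1 - t/4) * (1 - t/6)) / (1 - t/2)^3
noncomputable def gkS1 (t : ℝ) : ℝ := -t/2 + Real.sqrt t * Real.sqrt (1 + 3*t/4)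
noncomputable def gkSt1 (t : ℝ) : ℝ := -t/2 - Real.sqrt t * Real.sqrt (1 + 3*t/4)
noncomputable def gkS2 (t : ℝ) : ℝ := -t + Real.sqrt t * Real.sqrt (1 + t)
noncomputable def gkSt2 (t : ℝ) : ℝ := -t - Real.sqrt t * Real.sqrt (1 + t)
noncomputable def gkS3 (t : ℝ) : ℝ :=
  (-(3/2)*t*(1 - t/6) + Real.sqrt t * Real.sqrt (1 - t/4) * (1 + t/2)) / (1 - t/2)
noncomputable def gkSt3 (t : ℝ) : ℝ :=
  (-(3/2)*t*(1 - t/6) - Real.sqrt t * Real.sqrt (1 - t/4) * (1 + t/2)) / (1 - t/2)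
noncomputable def gkV2 (t : ℝ) : ℝ := (1 + t)^2
noncomputable def gkV3 (t : ℝ) : ℝ := (1 + t/2)^3 / (1 - t/2)
noncomputable def gkW1 (t : ℝ) : ℝ := (1 + t/2)⁻¹
noncomputable def gkW2 (t : ℝ) : ℝ := (Real.sqrt (1 + t))⁻¹
noncomputable def gkW3 (t : ℝ) : ℝ := 2 / (2 + t)
noncomputable def gkX1 (t : ℝ) : ℝ :=
  (1 + t/2) ^ (-(3:ℝ)/4) * (1 + 3*t/4) ^ (-(1:ℝ)/2)
noncomputable def gkX2 (t : ℝ) : ℝ := (1 + t) ^ (-(3:ℝ)/2)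
noncomputable def gkX3 (t : ℝ) : ℝ :=
  (1 - t/2) ^ ((3:ℝ)/4) * (1 - t/4) ^ (-(1:ℝ)/2) * (1 + t/2) ^ (-(4:ℝ))

open Real

/-! In each case `Y_s · Ỹ_s` is a perfect square `c_s²` (`c₁ = 1 + t/2`, `c₂ = 1`,
`c₃ = 1 − t/2`), so `Y_{1,s}^{s/8} Y_s^{−s/4} = Ỹ_s^{s/2} c_s^{−3s/4}`.  Moreover
`Ỹ₁ = (√(1 + 3t/4) − √t/2)²` and `Ỹ₃ = (√(1 − t/4) − √t/2)²`, so every power of `Ỹ_s` that occurs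
is a polynomial in `√t` and one further square root `b`, and the constraint reduces to an
identity in `√t` and `b` modulo `(√t)² = t` and the defining relation of `b²`. -/

lemma div_rpow_mul_rpow_of_mul_eq_sq {y y' c : ℝ} (hy' : 0 < y') (hc : 0 < c)
    (h : y * y' = c ^ 2) (p q : ℝ) :
    (y' / y) ^ p * y ^ q = y' ^ (2 * p - q) * c ^ (2 * q - 2 * p) := by
  have hy : 0 < y := by
    have : 0 < y * y' := h ▸ pow_pos hc 2
    exact pos_of_mul_pos_left this hy'.le
  have hlog : log y + log y' = 2 * log c := by
    rw [← log_mul hy.ne' hy'.ne', h, log_pow, Nat.cast_ofNat]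
  rw [rpow_def_of_pos (div_pos hy' hy), rpow_def_of_pos hy, rpow_def_of_pos hy',
    rpow_def_of_pos hc, ← exp_add, ← exp_add, log_div hy'.ne' hy.ne']
  congr 1
  linear_combination (q - p) * hlog

lemma sq_rpow_natCast_div_two {w : ℝ} (hw : 0 ≤ w) (n : ℕ) :
    (w ^ 2) ^ ((n : ℝ) / 2) = w ^ n := by
  rw [← rpow_natCast_mul hw, ← rpow_natCast]
  congr 1
  push_cast
  ring

lemma sqrt_sqrt_eq_rpow {x : ℝ} (hx : 0 ≤ x) : √(√x) = x ^ ((1 : ℝ) / 4) := by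
  rw [sqrt_eq_rpow, sqrt_eq_rpow, ← rpow_mul hx]
  norm_num

lemma half_sqrt_lt_sqrt {x y : ℝ} (hx : 0 ≤ x) (h : x / 4 < y) : √x / 2 < √y := by
  rw [lt_sqrt (by positivity), div_pow, sq_sqrt hx]
  linarith

section

variable {t : ℝ}

lemma gkY1_mul_gkYt1 (ht : 0 ≤ t) : gkY1 t * gkYt1 t = (1 + t / 2) ^ 2 := by
  have ha : √t ^ 2 = t := sq_sqrt ht
  have hb : √(1 + 3 * t / 4) ^ 2 = 1 + 3 * t / 4 := sq_sqrt (by linarith)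
  unfold gkY1 gkYt1
  linear_combination (-(1 + 3 * t / 4)) * ha - √t ^ 2 * hb

lemma gkYt1_eq_sq (ht : 0 ≤ t) : gkYt1 t = (√(1 + 3 * t / 4) - √t / 2) ^ 2 := by
  have ha : √t ^ 2 = t := sq_sqrt ht
  have hb : √(1 + 3 * t / 4) ^ 2 = 1 + 3 * t / 4 := sq_sqrt (by linarith)
  unfold gkYt1
  linear_combination (-1 / 4 : ℝ) * ha - hb

lemma gk_constraint_one (ht : 0 ≤ t) :
    (gkSt1 t - gkS1 t) * (gkYt1 t / gkY1 t) ^ ((1:ℝ)/8) * gkY1 t ^ (-(1:ℝ)/4)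
        + 2 * Real.sqrt (t * Real.sqrt (1 + t/2)) * gkZ1 t = 0 := by
  have hc : 0 < 1 + t / 2 := by linarith
  have hw : 0 < √(1 + 3 * t / 4) - √t / 2 := sub_pos.2 (half_sqrt_lt_sqrt ht (by linarith))
  have hYt : 0 < gkYt1 t := gkYt1_eq_sq ht ▸ pow_pos hw 2
  have hc' : (1 + t / 2) ^ ((1 : ℝ) / 4) = (1 + t / 2) * (1 + t / 2) ^ (-(3 : ℝ) / 4) := by
    rw [← rpow_one_add' hc.le (by norm_num)]
    norm_num
  rw [mul_assoc, div_rpow_mul_rpow_of_mul_eq_sq hYt hc (gkY1_mul_gkYt1 ht),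
    show 2 * (1 / 8) - -(1 : ℝ) / 4 = ((1 : ℕ) : ℝ) / 2 by norm_num, gkYt1_eq_sq ht,
    sq_rpow_natCast_div_two hw.le, pow_one,
    show 2 * (-(1 : ℝ) / 4) - 2 * (1 / 8) = -3 / 4 by norm_num,
    sqrt_mul ht, sqrt_sqrt_eq_rpow hc.le, hc']
  have hb : √(1 + 3 * t / 4) ^ 2 = 1 + 3 * t / 4 := sq_sqrt (by linarith)
  have key : 1 + 3 * t / 4 - 1 / 2 * √t * √(1 + 3 * t / 4)
      = √(1 + 3 * t / 4) * (√(1 + 3 * t / 4) - √t / 2) := by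
    linear_combination -hb
  unfold gkSt1 gkS1 gkZ1
  rw [key]
  field_simp
  ring

lemma gkY2_mul_gkYt2 (ht : 0 ≤ t) : gkY2 t * gkYt2 t = 1 ^ 2 := by
  have ha : √t ^ 2 = t := sq_sqrt ht
  have hb : √(1 + t) ^ 2 = 1 + t := sq_sqrt (by linarith)
  unfold gkY2 gkYt2
  linear_combination hb - ha

lemma gkYt2_pos (ht : 0 ≤ t) : 0 < gkYt2 t := by
  have := sqrt_lt_sqrt ht (lt_one_add t)
  unfold gkYt2
  linarith

lemma gk_constraint_two (ht : 0 ≤ t) :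
    (gkSt2 t - gkS2 t) * (gkYt2 t / gkY2 t) ^ ((1:ℝ)/4) * gkY2 t ^ (-(1:ℝ)/2)
        + 2 * Real.sqrt t * gkZ2 t = 0 := by
  have hb : √(1 + t) ^ 2 = 1 + t := sq_sqrt (by linarith)
  rw [mul_assoc, div_rpow_mul_rpow_of_mul_eq_sq (gkYt2_pos ht) one_pos (gkY2_mul_gkYt2 ht),
    show 2 * (1 / 4) - -(1 : ℝ) / 2 = 1 by norm_num, rpow_one, one_rpow, mul_one]
  unfold gkSt2 gkS2 gkYt2 gkZ2
  linear_combination (-2 * √t) * hb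

lemma gkY3_mul_gkYt3 (ht : 0 ≤ t) (ht4 : t ≤ 4) : gkY3 t * gkYt3 t = (1 - t / 2) ^ 2 := by
  have ha : √t ^ 2 = t := sq_sqrt ht
  have hb : √(1 - t / 4) ^ 2 = 1 - t / 4 := sq_sqrt (by linarith)
  unfold gkY3 gkYt3
  linear_combination (-(1 - t / 4)) * ha - √t ^ 2 * hb

lemma gkYt3_eq_sq (ht : 0 ≤ t) (ht4 : t ≤ 4) : gkYt3 t = (√(1 - t / 4) - √t / 2) ^ 2 := by
  have ha : √t ^ 2 = t := sq_sqrt ht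
  have hb : √(1 - t / 4) ^ 2 = 1 - t / 4 := sq_sqrt (by linarith)
  unfold gkYt3
  linear_combination (-1 / 4 : ℝ) * ha - hb

lemma gk_constraint_three (ht : 0 ≤ t) (ht2 : t < 2) :
    (gkSt3 t - gkS3 t) * (gkYt3 t / gkY3 t) ^ ((3:ℝ)/8) * gkY3 t ^ (-(3:ℝ)/4)
        + 2 * Real.sqrt (t / Real.sqrt (1 - t/2)) * gkZ3 t = 0 := by
  have hc : 0 < 1 - t / 2 := by linarith
  have hw : 0 < √(1 - t / 4) - √t / 2 := sub_pos.2 (half_sqrt_lt_sqrt ht (by linarith))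
  have hYt : 0 < gkYt3 t := gkYt3_eq_sq ht (by linarith) ▸ pow_pos hw 2
  have hc' : (1 - t / 2) ^ (-(9 : ℝ) / 4)
      = ((1 - t / 2) ^ ((1 : ℝ) / 4) * (1 - t / 2) ^ 2)⁻¹ := by
    rw [neg_div, rpow_neg hc.le, ← rpow_add_natCast hc.ne']
    norm_num
  rw [mul_assoc, div_rpow_mul_rpow_of_mul_eq_sq hYt hc (gkY3_mul_gkYt3 ht (by linarith)),
    show 2 * (3 / 8) - -(3 : ℝ) / 4 = ((3 : ℕ) : ℝ) / 2 by norm_num,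
    gkYt3_eq_sq ht (by linarith),
    sq_rpow_natCast_div_two hw.le, show 2 * (-(3 : ℝ) / 4) - 2 * (3 / 8) = -9 / 4 by norm_num,
    hc', sqrt_div ht, sqrt_sqrt_eq_rpow hc.le]
  have ha : √t ^ 2 = t := sq_sqrt ht
  have hb : √(1 - t / 4) ^ 2 = 1 - t / 4 := sq_sqrt (by linarith)
  have key : (1 - t / 4) * (1 + t / 2) - 3 / 2 * √t * √(1 - t / 4) * (1 - t / 6)
      = √(1 - t / 4) * (√(1 - t / 4) - √t / 2) ^ 3 := by
    linear_combination
      (-(√(1 - t / 4) ^ 2 + (1 - t / 4) - 3 / 2 * √t * √(1 - t / 4) + 3 / 4 * √t ^ 2)) * hb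
        - (3 / 4 * (1 - t / 4) - √t * √(1 - t / 4) / 8) * ha
  unfold gkSt3 gkS3 gkZ3
  rw [key]
  field_simp
  ring

end

/-- for `0 < t < 2`, with `z₁ = t(1+t/2)^{1/2}`, `z₂ = t`,
`z₃ = t(1−t/2)^{−1/2}`, `Y_{1,s} = Ỹ_s/Y_s` and `S_{1,s} = S̃_s − S_s`, the
constraint `S_{1,s}·Y_{1,s}^{s/8}·Y_s^{−s/4} + 2 z_s^{1/2} Z_s = 0` holds
for `s = 1, 2, 3` (all fractional powers being real powers of positive
reals). -/
theorem stmt_14 (t : ℝ) (ht0 : 0 < t) (ht2 : t < 2) :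
    (gkSt1 t - gkS1 t) * (gkYt1 t / gkY1 t) ^ ((1:ℝ)/8) * gkY1 t ^ (-(1:ℝ)/4)
        + 2 * Real.sqrt (t * Real.sqrt (1 + t/2)) * gkZ1 t = 0 ∧
    (gkSt2 t - gkS2 t) * (gkYt2 t / gkY2 t) ^ ((1:ℝ)/4) * gkY2 t ^ (-(1:ℝ)/2)
        + 2 * Real.sqrt t * gkZ2 t = 0 ∧
    (gkSt3 t - gkS3 t) * (gkYt3 t / gkY3 t) ^ ((3:ℝ)/8) * gkY3 t ^ (-(3:ℝ)/4)
        + 2 * Real.sqrt (t / Real.sqrt (1 - t/2)) * gkZ3 t = 0 :=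
  ⟨gk_constraint_one ht0.le, gk_constraint_two ht0.le, gk_constraint_three ht0.le ht2⟩
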